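/- Let (G,M) be a MaxEDP instance with tree decomposition (T,β) and fractional solution (f,x), let U ⊆ V(G), and consider the two instances obtained by restriction: G_1 = G[U] and G_2 = G − U, with f_i the subflow of f consisting of the flow paths entirely contained in G_i, x_i its marginals, M_i the pairs of M with both endpoints in V(G_i), and (T,β_i) the restriction of (T,β) to V(G_i). Then every node t ∈ V(T) that is good with respect to (f,x) in the original instance is also good with respect to (f_i, x_i) in the restricted instance, for i = 1, 2. -/

import Mathlib

open SimpleGraph Finset
open scoped Classical

namespace Paper

noncomputable section

variable {V : Type} [Fintype V] [DecidableEq V] {τ : Type} [Fintype τ]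

/-! ### Multicommodity flows as weighted path systems -/

/-- Total amount of flow sent on paths from `u` to `v`. -/
def pairFlow {G : SimpleGraph V} (f : ∀ u v : V, G.Path u v → ℝ) (u v : V) : ℝ :=
  ∑ p : G.Path u v, f u v p

/-- Total amount of flow on paths using the edge `e`. -/
def edgeLoad {G : SimpleGraph V} (f : ∀ u v : V, G.Path u v → ℝ) (e : Sym2 V) : ℝ :=
  ∑ u, ∑ v, ∑ p : G.Path u v, if e ∈ (p : G.Walk u v).edges then f u v p else 0

/-- Total amount of flow on paths using the vertex `w`. -/
def vertLoad {G : SimpleGraph V} (f : ∀ u v : V, G.Path u v → ℝ) (w : V) : ℝ :=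
  ∑ u, ∑ v, ∑ p : G.Path u v, if w ∈ (p : G.Walk u v).support then f u v p else 0

/-- The marginal of `z`: the total amount of flow routed for `z`,
i.e. on paths having `z` as an endpoint. -/
def margOf {G : SimpleGraph V} (f : ∀ u v : V, G.Path u v → ℝ) (z : V) : ℝ :=
  (∑ v, pairFlow f z v) + ∑ u, pairFlow f u z

/-- The total value `|f|` of a multicommodity flow for the pairs `M`. -/
def valueOf {G : SimpleGraph V} (f : ∀ u v : V, G.Path u v → ℝ) (M : Finset (V × V)) : ℝ :=
  ∑ m ∈ M, pairFlow f m.1 m.2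

/-- The pairs `M` form a matching on the terminals: all the endpoints are distinct. -/
def PairsMatching (M : Finset (V × V)) : Prop :=
  (∀ m ∈ M, m.1 ≠ m.2) ∧
    ∀ m ∈ M, ∀ m' ∈ M, m ≠ m' →
      m.1 ≠ m'.1 ∧ m.1 ≠ m'.2 ∧ m.2 ≠ m'.1 ∧ m.2 ≠ m'.2

/-- `v` is a terminal of the collection of pairs `M`. -/
def Terminal (M : Finset (V × V)) (v : V) : Prop :=
  ∃ m ∈ M, m.1 = v ∨ m.2 = v

/-- A feasible fractional solution `(f, x)` to the multicommodity flow relaxation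
`EDP-LP` of MaxEDP (edge capacities): nonnegative flow between the pairs of `M` only,
routing `x_i ≤ 1` for each pair, satisfying the edge capacities.  The marginals `x`
are recovered as `pairFlow f` and `margOf f`. -/
structure EDPFlow (G : SimpleGraph V) (cap : Sym2 V → ℕ) (M : Finset (V × V)) where
  f : ∀ u v : V, G.Path u v → ℝ
  nonneg : ∀ u v p, 0 ≤ f u v p
  supp : ∀ u v, (u, v) ∉ M → ∀ p, f u v p = 0
  le_one : ∀ m ∈ M, pairFlow f m.1 m.2 ≤ 1
  feas : ∀ e : Sym2 V, edgeLoad f e ≤ (cap e : ℝ)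

def EDPFlow.value {G : SimpleGraph V} {cap : Sym2 V → ℕ} {M : Finset (V × V)}
    (F : EDPFlow G cap M) : ℝ := valueOf F.f M

def EDPFlow.marg {G : SimpleGraph V} {cap : Sym2 V → ℕ} {M : Finset (V × V)}
    (F : EDPFlow G cap M) (z : V) : ℝ := margOf F.f z

/-- A feasible fractional solution to the multicommodity flow relaxation of
MaxNDP (node capacities). -/
structure NDPFlow (G : SimpleGraph V) (cap : V → ℕ) (M : Finset (V × V)) where
  f : ∀ u v : V, G.Path u v → ℝ
  nonneg : ∀ u v p, 0 ≤ f u v p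
  supp : ∀ u v, (u, v) ∉ M → ∀ p, f u v p = 0
  le_one : ∀ m ∈ M, pairFlow f m.1 m.2 ≤ 1
  feas : ∀ w : V, vertLoad f w ≤ (cap w : ℝ)

def NDPFlow.value {G : SimpleGraph V} {cap : V → ℕ} {M : Finset (V × V)}
    (F : NDPFlow G cap M) : ℝ := valueOf F.f M

def NDPFlow.marg {G : SimpleGraph V} {cap : V → ℕ} {M : Finset (V × V)}
    (F : NDPFlow G cap M) (z : V) : ℝ := margOf F.f z

/-- There is a feasible integral routing (with congestion `con`) of at least `q`
of the pairs of `M`, subject to edge capacities: a subset `R ⊆ M` of size at least `q`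
together with a choice of a path for each pair of `R` such that every edge `e`
is on at most `con * cap e` of the chosen paths. -/
def HasEDPRouting (G : SimpleGraph V) (cap : Sym2 V → ℕ) (M : Finset (V × V))
    (con : ℕ) (q : ℝ) : Prop :=
  ∃ (R : Finset (V × V)) (route : ∀ m ∈ R, G.Path m.1 m.2),
    R ⊆ M ∧ q ≤ (R.card : ℝ) ∧
      ∀ e : Sym2 V,
        (R.attach.filter fun m => e ∈ (route m.1 m.2).val.edges).card ≤ con * cap e

/-- There is a feasible integral routing (with congestion `con`) of at least `q`
of the pairs of `M`, subject to node capacities. -/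
def HasNDPRouting (G : SimpleGraph V) (cap : V → ℕ) (M : Finset (V × V))
    (con : ℕ) (q : ℝ) : Prop :=
  ∃ (R : Finset (V × V)) (route : ∀ m ∈ R, G.Path m.1 m.2),
    R ⊆ M ∧ q ≤ (R.card : ℝ) ∧
      ∀ w : V,
        (R.attach.filter fun m => w ∈ (route m.1 m.2).val.support).card ≤ con * cap w

/-! ### Induced subgraphs on vertex subsets -/

/-- The subgraph of `G` induced on `U` (as a graph on the same vertex set, with all
vertices outside `U` isolated). -/
def restrictG (G : SimpleGraph V) (U : Set V) : SimpleGraph V where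
  Adj u v := u ∈ U ∧ v ∈ U ∧ G.Adj u v
  symm := ⟨fun u v h => ⟨h.2.1, h.1, h.2.2.symm⟩⟩
  loopless := ⟨fun v h => G.irrefl h.2.2⟩

lemma restrictG_le (G : SimpleGraph V) (U : Set V) : restrictG G U ≤ G :=
  fun _ _ h => h.2.2

/-- Push a path along a subgraph inclusion. -/
def pathMapLe {G G' : SimpleGraph V} (h : G ≤ G') {u v : V} (p : G.Path u v) :
    G'.Path u v :=
  ⟨(p : G.Walk u v).mapLe h, (SimpleGraph.Walk.mapLe_isPath h).mpr p.prop⟩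

/-- The vertex set `s` is (nonempty and) connected in `G`. -/
def ConnOn (G : SimpleGraph V) (s : Finset V) : Prop :=
  s.Nonempty ∧ ∀ u ∈ s, ∀ v ∈ s, (restrictG G ↑s).Reachable u v

/-! ### Rooted tree decompositions -/

/-- The parent adhesion `σ(t) = β(t) ∩ β(parent t)` (empty at the root). -/
def sigmaOf (parent : τ → τ) (root : τ) (bag : τ → Finset V) (t : τ) : Finset V :=
  if t = root then ∅ else bag t ∩ bag (parent t)

/-- `γ(t)`: the union of the bags at the descendants of `t`. -/
def gammaOf (parent : τ → τ) (bag : τ → Finset V) (t : τ) : Finset V :=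
  Finset.univ.filter fun v => ∃ s, (∃ n, parent^[n] s = t) ∧ v ∈ bag s

/-- A rooted tree decomposition of `G`, encoded by the parent map of the rooted
tree on the node set `τ`.  The last two axioms state that for every vertex `v` the
set of nodes whose bag contains `v` is connected in the tree (it is closed under
taking intermediate ancestors, and any two such nodes have a common ancestor
whose bag still contains `v`). -/
structure TreeDecomp (τ : Type) [Fintype τ] {V : Type} [Fintype V] [DecidableEq V]
    (G : SimpleGraph V) where
  root : τ
  parent : τ → τ
  parent_root : parent root = root
  reach_root : ∀ t : τ, ∃ n : ℕ, parent^[n] t = root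
  bag : τ → Finset V
  edge_in_bag : ∀ u v : V, G.Adj u v → ∃ t, u ∈ bag t ∧ v ∈ bag t
  vert_in_bag : ∀ v : V, ∃ t, v ∈ bag t
  interval : ∀ (v : V) (t : τ) (m n : ℕ), m ≤ n → v ∈ bag t → v ∈ bag (parent^[n] t) →
    v ∈ bag (parent^[m] t)
  meet : ∀ (v : V) (t s : τ), v ∈ bag t → v ∈ bag s →
    ∃ m n : ℕ, parent^[m] t = parent^[n] s ∧ v ∈ bag (parent^[m] t)

variable {G : SimpleGraph V}

/-- The tree of the decomposition is a path rooted at one of its endpoints: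
every node has at most one child. -/
def TreeDecomp.IsPathDecomp (D : TreeDecomp τ G) : Prop :=
  ∀ t s : τ, D.parent t = D.parent s → t ≠ D.parent t → s ≠ D.parent s → t = s

def TreeDecomp.sigma (D : TreeDecomp τ G) (t : τ) : Finset V :=
  sigmaOf D.parent D.root D.bag t

def TreeDecomp.gamma (D : TreeDecomp τ G) (t : τ) : Finset V :=
  gammaOf D.parent D.bag t

def TreeDecomp.alpha (D : TreeDecomp τ G) (t : τ) : Finset V :=
  D.gamma t \ D.sigma t

/-- The graph `G(t) = G[γ(t)] − E(G[σ(t)])`. -/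
def TreeDecomp.Gt (D : TreeDecomp τ G) (t : τ) : SimpleGraph V where
  Adj u v := G.Adj u v ∧ u ∈ D.gamma t ∧ v ∈ D.gamma t ∧ ¬(u ∈ D.sigma t ∧ v ∈ D.sigma t)
  symm := ⟨fun u v h => ⟨h.1.symm, h.2.2.1, h.2.1, fun hc => h.2.2.2 ⟨hc.2, hc.1⟩⟩⟩
  loopless := ⟨fun v h => G.irrefl h.1⟩

/-! ### Flows to a set of vertices -/

/-- A feasible (edge-capacitated) flow in `H` whose flow paths all end in `S`. -/
structure EFlowToSet (H : SimpleGraph V) (cap : Sym2 V → ℕ) (S : Finset V) where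
  g : ∀ u v : V, H.Path u v → ℝ
  nonneg : ∀ u v p, 0 ≤ g u v p
  ends : ∀ u v p, g u v p ≠ 0 → v ∈ S
  feas : ∀ e : Sym2 V, edgeLoad g e ≤ (cap e : ℝ)

/-- The amount of flow routed from `z` (to the target set). -/
def EFlowToSet.fromAmt {H : SimpleGraph V} {cap : Sym2 V → ℕ} {S : Finset V}
    (F : EFlowToSet H cap S) (z : V) : ℝ :=
  ∑ v, pairFlow F.g z v

/-- A feasible (node-capacitated) flow in `H` whose flow paths all end in `S`. -/
structure NFlowToSet (H : SimpleGraph V) (cap : V → ℕ) (S : Finset V) where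
  g : ∀ u v : V, H.Path u v → ℝ
  nonneg : ∀ u v p, 0 ≤ g u v p
  ends : ∀ u v p, g u v p ≠ 0 → v ∈ S
  feas : ∀ w : V, vertLoad g w ≤ (cap w : ℝ)

def NFlowToSet.fromAmt {H : SimpleGraph V} {cap : V → ℕ} {S : Finset V}
    (F : NFlowToSet H cap S) (z : V) : ℝ :=
  ∑ v, pairFlow F.g z v

/-! ### Safe and good nodes -/

/-- A node `t` is safe w.r.t. an (edge-capacitated) fractional solution `F` if some
feasible flow in `G(t)` routes at least `x(z)/(4r)` from every `z ∈ γ(t)` to `σ(t)`. -/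
def ESafe {M : Finset (V × V)} (cap : Sym2 V → ℕ) (D : TreeDecomp τ G) (r : ℕ)
    (F : EDPFlow G cap M) (t : τ) : Prop :=
  ∃ gf : EFlowToSet (D.Gt t) cap (D.sigma t),
    ∀ z ∈ D.gamma t, F.marg z / (4 * (r : ℝ)) ≤ gf.fromAmt z

/-- A node `t` is safe w.r.t. a node-capacitated fractional solution `F`. -/
def NSafe {M : Finset (V × V)} (cap : V → ℕ) (D : TreeDecomp τ G) (r : ℕ)
    (F : NDPFlow G cap M) (t : τ) : Prop :=
  ∃ gf : NFlowToSet (D.Gt t) cap (D.sigma t),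
    ∀ z ∈ D.gamma t, F.marg z / (4 * (r : ℝ)) ≤ gf.fromAmt z

/-- `t` is good w.r.t. a flow `f` (for the decomposition data `parent`, `root`, `bag`):
every flow path in the support of `f` with an endpoint in `γ(t)` intersects `σ(t)`. -/
def GoodWrt {G : SimpleGraph V} (f : ∀ u v : V, G.Path u v → ℝ)
    (parent : τ → τ) (root : τ) (bag : τ → Finset V) (t : τ) : Prop :=
  ∀ (u v : V) (p : G.Path u v), f u v p ≠ 0 →
    (u ∈ gammaOf parent bag t ∨ v ∈ gammaOf parent bag t) →
    ∃ w ∈ sigmaOf parent root bag t, w ∈ (p : G.Walk u v).support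

def EGood {M : Finset (V × V)} {cap : Sym2 V → ℕ} (D : TreeDecomp τ G)
    (F : EDPFlow G cap M) (t : τ) : Prop :=
  GoodWrt F.f D.parent D.root D.bag t

def NGood {M : Finset (V × V)} {cap : V → ℕ} (D : TreeDecomp τ G)
    (F : NDPFlow G cap M) (t : τ) : Prop :=
  GoodWrt F.f D.parent D.root D.bag t

/-- The total capacity of the edge cut `δ(U)`. -/
def cutCap (G : SimpleGraph V) (cap : Sym2 V → ℕ) (U : Finset V) : ℝ :=
  ∑ u ∈ U, ∑ v ∈ Uᶜ, if G.Adj u v then (cap s(u, v) : ℝ) else 0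

/-! ### Multicommodity flows with demands, well-linkedness -/

/-- A feasible edge-capacitated multicommodity flow routing at least `dem u v`
between every pair `(u, v)`. -/
structure EMCFlow (H : SimpleGraph V) (cap : Sym2 V → ℕ) (dem : V → V → ℝ) where
  g : ∀ u v : V, H.Path u v → ℝ
  nonneg : ∀ u v p, 0 ≤ g u v p
  routes : ∀ u v : V, dem u v ≤ pairFlow g u v
  feas : ∀ e : Sym2 V, edgeLoad g e ≤ (cap e : ℝ)

/-- A feasible node-capacitated multicommodity flow routing at least `dem u v`
between every pair `(u, v)`. -/
structure NMCFlow (H : SimpleGraph V) (cap : V → ℕ) (dem : V → V → ℝ) where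
  g : ∀ u v : V, H.Path u v → ℝ
  nonneg : ∀ u v p, 0 ≤ g u v p
  routes : ∀ u v : V, dem u v ≤ pairFlow g u v
  feas : ∀ w : V, vertLoad g w ≤ (cap w : ℝ)

/-- `X` is `π`-flow-well-linked in the edge-capacitated graph `H`. -/
def FlowWellLinked (H : SimpleGraph V) (cap : Sym2 V → ℕ) (X : Finset V)
    (π : V → ℝ) : Prop :=
  Nonempty (EMCFlow H cap fun u v =>
    if u ∈ X ∧ v ∈ X then π u * π v / (∑ w ∈ X, π w) else 0)

/-- The pairs of `M` with both endpoints in `s`. -/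
def inducedPairs (M : Finset (V × V)) (s : Finset V) : Finset (V × V) :=
  M.filter fun m => m.1 ∈ s ∧ m.2 ∈ s

/-- The set of endpoints of the pairs of `M`. -/
def endpointsOf (M : Finset (V × V)) : Finset V :=
  M.image Prod.fst ∪ M.image Prod.snd

/-! ### Minors, graph classes, torsos -/

/-- `H` is a minor of `G`, via disjoint connected branch sets. -/
def IsMinorOf {W : Type} (H : SimpleGraph W) (G : SimpleGraph V) : Prop :=
  ∃ φ : W → Finset V,
    (∀ w, ConnOn G (φ w)) ∧
    (∀ w w', w ≠ w' → Disjoint (φ w) (φ w')) ∧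
    (∀ w w', H.Adj w w' → ∃ a ∈ φ w, ∃ b ∈ φ w', G.Adj a b)

/-- A class of (finite) graphs, given by its members on the canonical vertex sets. -/
def MinorClosed (𝒢 : ∀ n : ℕ, SimpleGraph (Fin n) → Prop) : Prop :=
  ∀ {n m : ℕ} (G : SimpleGraph (Fin n)) (H : SimpleGraph (Fin m)),
    𝒢 n G → IsMinorOf H G → 𝒢 m H

/-- A finite graph belongs to the class `𝒢` (up to isomorphism). -/
def InClass (𝒢 : ∀ n : ℕ, SimpleGraph (Fin n) → Prop) {W : Type}
    (H : SimpleGraph W) : Prop :=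
  ∃ (n : ℕ) (H' : SimpleGraph (Fin n)), 𝒢 n H' ∧ Nonempty (H ≃g H')

/-- The torso at `t`: the subgraph induced on `β(t)`, with all adhesions of tree edges
incident to `t` turned into cliques (as a graph on `V`; restrict to the bag to get
the usual torso). -/
def TreeDecomp.torso (D : TreeDecomp τ G) (t : τ) : SimpleGraph V :=
  SimpleGraph.fromRel fun u v =>
    u ∈ D.bag t ∧ v ∈ D.bag t ∧
      (G.Adj u v ∨ (u ∈ D.sigma t ∧ v ∈ D.sigma t) ∨
        ∃ s : τ, s ≠ D.root ∧ D.parent s = t ∧ u ∈ D.sigma s ∧ v ∈ D.sigma s)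

/-! ### Treedepth -/

/-- The connected component of `v` in `G` restricted to `s`. -/
def compOf (G : SimpleGraph V) (s : Finset V) (v : V) : Finset V :=
  s.filter fun u => (restrictG G ↑s).Reachable v u

/-- Treedepth of `G[s]`, computed with fuel (the recursion terminates before the
fuel runs out, since both deleting a vertex and passing to a connected component of
a disconnected graph strictly decrease the number of vertices). -/
def tdAux (G : SimpleGraph V) : ℕ → Finset V → ℕ
  | 0, _ => 0
  | fuel + 1, s =>
    if hs : s.Nonempty then
      if ConnOn G s then
        1 + s.inf' hs fun v => tdAux G fuel (s.erase v)
      else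
        s.sup fun v => tdAux G fuel (compOf G s v)
    else 0

/-- The treedepth of the subgraph of `G` induced on `s`:  `td(∅) = 0`;
`td(G) = 1 + min_v td(G − v)` for a connected nonempty `G`; and `td(G)` is the maximum
of the treedepths of the connected components for a disconnected `G`. -/
def treedepth (G : SimpleGraph V) (s : Finset V) : ℕ :=
  tdAux G s.card s

end


section Restriction

variable {V : Type} {G : SimpleGraph V} {S : Set V}

lemma mem_of_mem_support_restrictG_of_start_mem {u v w : V} (q : (restrictG G S).Walk u v)
    (hu : u ∈ S) (hw : w ∈ q.support) : w ∈ S := by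
  induction q with
  | nil =>
    rw [Walk.support_nil, List.mem_singleton] at hw
    exact hw ▸ hu
  | cons h q ih =>
    rcases List.mem_cons.mp hw with rfl | hw
    · exact hu
    · exact ih h.2.1 hw

/-- Only a trivial walk can start and end outside `S`, since every edge of `G[S]`
lies inside `S`. -/
lemma mem_of_mem_support_restrictG {u v w : V} (q : (restrictG G S).Walk u v)
    (h : u ∈ S ∨ v ∈ S) (hw : w ∈ q.support) : w ∈ S := by
  rcases h with hu | hv
  · exact mem_of_mem_support_restrictG_of_start_mem q hu hw
  · exact mem_of_mem_support_restrictG_of_start_mem q.reverse hv (by simpa using hw)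

variable {τ : Type} [DecidableEq V] {parent : τ → τ} {root : τ} {bag bag' : τ → Finset V}

lemma mem_of_mem_gammaOf_restrict [Fintype τ] [Fintype V]
    (hbag : ∀ s x, x ∈ bag' s ↔ x ∈ bag s ∧ x ∈ S)
    {t : τ} {x : V} (hx : x ∈ gammaOf parent bag' t) :
    x ∈ gammaOf parent bag t ∧ x ∈ S := by
  simp only [gammaOf, Finset.mem_filter, Finset.mem_univ, true_and, hbag] at hx ⊢
  obtain ⟨s, hst, hxs, hxS⟩ := hx
  exact ⟨⟨s, hst, hxs⟩, hxS⟩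

lemma mem_sigmaOf_restrict (hbag : ∀ s x, x ∈ bag' s ↔ x ∈ bag s ∧ x ∈ S)
    {t : τ} {w : V} (hw : w ∈ sigmaOf parent root bag t) (hwS : w ∈ S) :
    w ∈ sigmaOf parent root bag' t := by
  unfold sigmaOf at hw ⊢
  split_ifs at hw ⊢
  · exact hw
  · rw [Finset.mem_inter] at hw
    rw [Finset.mem_inter, hbag, hbag]
    exact ⟨⟨hw.1, hwS⟩, ⟨hw.2, hwS⟩⟩

/-- A flow path of the restricted flow with an endpoint in the restricted `γ(t)` is a flow
path of the original one; it meets `σ(t)` there, and it does so inside `S` because it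
runs in `G[S]` and has an endpoint in `S`. -/
theorem GoodWrt.restrict [Fintype τ] [Fintype V] {f : ∀ u v : V, G.Path u v → ℝ} {t : τ}
    (hgood : GoodWrt f parent root bag t)
    (hbag : ∀ s x, x ∈ bag' s ↔ x ∈ bag s ∧ x ∈ S) :
    GoodWrt (G := restrictG G S) (fun u v p => f u v (pathMapLe (restrictG_le G S) p))
      parent root bag' t := by
  intro u v p hp hend
  have hend' := hend.imp (mem_of_mem_gammaOf_restrict hbag) (mem_of_mem_gammaOf_restrict hbag)
  obtain ⟨w, hwσ, hwp⟩ := hgood u v _ hp (hend'.imp And.left And.left)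
  have hwp : w ∈ (p : (restrictG G S).Walk u v).support := by
    rwa [pathMapLe, Walk.support_mapLe_eq_support] at hwp
  have hwS : w ∈ S := mem_of_mem_support_restrictG _ (hend'.imp And.right And.right) hwp
  exact ⟨w, mem_sigmaOf_restrict hbag hwσ hwS, hwp⟩

end Restriction

/-- **Lemma 3 (good nodes remain good under restriction).**
Let `U ⊆ V(G)` and consider the restricted instances on `G₁ = G[U]` and `G₂ = G − U`,
with the restricted flows (the subflows of `f` on paths entirely inside `G₁`,
resp. `G₂`) and the restricted decompositions (bags `β(s) ∩ U`, resp. `β(s) \ U`).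
Every node `t` that is good with respect to `(f, x)` is also good in both restricted
instances. -/
theorem good_in_restriction
    {V : Type} [Fintype V] [DecidableEq V] {τ : Type} [Fintype τ]
    (G : SimpleGraph V) (cap : Sym2 V → ℕ) (M : Finset (V × V))
    (F : EDPFlow G cap M) (D : TreeDecomp τ G) (U : Finset V)
    (t : τ) (hgood : EGood D F t) :
    GoodWrt (G := restrictG G ↑U)
        (fun u v p => F.f u v (pathMapLe (restrictG_le G ↑U) p))
        D.parent D.root (fun s => D.bag s ∩ U) t ∧
      GoodWrt (G := restrictG G ((↑U : Set V)ᶜ))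
        (fun u v p => F.f u v (pathMapLe (restrictG_le G ((↑U : Set V)ᶜ)) p))
        D.parent D.root (fun s => D.bag s \ U) t :=
  ⟨hgood.restrict fun _ _ => by simp, hgood.restrict fun _ _ => by simp⟩

end Paper
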